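/- In so(6) with the chain h = so(3)^{prin} ⊂ k = so(5) (upper-left block) ⊂ so(6), where so(3)^{prin} = span{√3E₁₄ − E₂₄ + E₃₅, √3E₁₅ + E₂₅ + E₃₄, 2E₂₃ − E₄₅}: the vectors X = E₁₂ + E₂₆ and Y = E₁₃ − E₃₆ satisfy [X,Y] = 0, while [E₁₂, E₁₃] = −E₂₃ has nonzero orthogonal projection onto m = so(5) ⊖ so(3)^{prin}. Hence condition (*) fails for the chain (SO(3)^{prin}, SO(5), SO(6)). -/

import Mathlib

open Matrix

noncomputable section

/-- `E i j = e_{ij} - e_{ji}` in the real `6 × 6` matrices (0-based indices: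
`E i j` here corresponds to `E_{(i+1)(j+1)}` in the paper). -/
def E (i j : Fin 6) : Matrix (Fin 6) (Fin 6) ℝ :=
  Matrix.single i j 1 - Matrix.single j i 1

/-- The biinvariant inner product `⟨A,B⟩ = -tr(AB)`. -/
def ip {n : ℕ} (A B : Matrix (Fin n) (Fin n) ℝ) : ℝ := - (A * B).trace

/-- The associated norm. -/
def nrm {n : ℕ} (A : Matrix (Fin n) (Fin n) ℝ) : ℝ := Real.sqrt (ip A A)

/-- Orthogonal complement with respect to `ip`. -/
def perp {n : ℕ} (W : Submodule ℝ (Matrix (Fin n) (Fin n) ℝ)) :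
    Submodule ℝ (Matrix (Fin n) (Fin n) ℝ) where
  carrier := {v | ∀ w ∈ W, ip v w = 0}
  add_mem' := by
    intro a b ha hb w hw
    have h1 := ha w hw
    have h2 := hb w hw
    simp only [ip, Matrix.add_mul, Matrix.trace_add] at *
    linarith
  zero_mem' := by intro w hw; simp [ip]
  smul_mem' := by
    intro c a ha w hw
    have h1 := ha w hw
    have h2 : (a * w).trace = 0 := by simp only [ip] at h1; linarith
    simp [ip, Matrix.smul_mul, Matrix.trace_smul, h2]

/-- The Lie algebra `so(n)` of skew-symmetric matrices, as a submodule. -/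
def so (n : ℕ) : Submodule ℝ (Matrix (Fin n) (Fin n) ℝ) where
  carrier := {A | Aᵀ = -A}
  add_mem' := by
    intro a b ha hb
    simp only [Set.mem_setOf_eq, Matrix.transpose_add] at *
    rw [ha, hb]; abel
  zero_mem' := by simp
  smul_mem' := by
    intro c a ha
    simp only [Set.mem_setOf_eq, Matrix.transpose_smul] at *
    rw [ha, smul_neg]

/-- `P` is the orthogonal projection onto `m` with respect to `ip`. -/
def IsOrthProj {n : ℕ} (m : Submodule ℝ (Matrix (Fin n) (Fin n) ℝ))
    (P : Matrix (Fin n) (Fin n) ℝ →ₗ[ℝ] Matrix (Fin n) (Fin n) ℝ) : Prop :=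
  (∀ v, P v ∈ m) ∧ (∀ v ∈ m, P v = v) ∧ (∀ v, v - P v ∈ perp m)

/-- Condition (*) of Schwachhöfer–Tapp for the decomposition `p = m ⊕ s`, where
`P` is the orthogonal projection onto `m`:  there is `C > 0` with
`‖[Xᵐ,Yᵐ]ᵐ‖ ≤ C‖[X,Y]‖` for all `X, Y ∈ m ⊕ s`. -/
def CondStar {n : ℕ} (m s : Submodule ℝ (Matrix (Fin n) (Fin n) ℝ))
    (P : Matrix (Fin n) (Fin n) ℝ →ₗ[ℝ] Matrix (Fin n) (Fin n) ℝ) : Prop :=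
  ∃ C > 0, ∀ X Y, X ∈ m ⊔ s → Y ∈ m ⊔ s →
    nrm (P ⁅P X, P Y⁆) ≤ C * nrm ⁅X, Y⁆

section Aux

lemma std_mul (i j k l : Fin 6) : Matrix.single i j (1:ℝ) * Matrix.single k l 1
    = if j = k then Matrix.single i l 1 else 0 := by
  split_ifs with hh
  · subst hh; simpa using Matrix.single_mul_single_same i j (1:ℝ) l 1
  · exact Matrix.single_mul_single_of_ne 1 i j k hh 1

lemma std_tr (i j : Fin 6) : (Matrix.single i j (1:ℝ)).trace = if j = i then 1 else 0 := by
  split_ifs with hh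
  · subst hh; exact Matrix.trace_single_eq_same j 1
  · exact Matrix.trace_single_eq_of_ne i j 1 (Ne.symm hh)

lemma std_transpose (i j : Fin 6) :
    (Matrix.single i j (1:ℝ))ᵀ = Matrix.single j i 1 := by
  ext a b
  simp [Matrix.single, Matrix.transpose_apply, and_comm]

lemma mem_perp {n : ℕ} {W : Submodule ℝ (Matrix (Fin n) (Fin n) ℝ)}
    {v : Matrix (Fin n) (Fin n) ℝ} : v ∈ perp W ↔ ∀ w ∈ W, ip v w = 0 := Iff.rfl

lemma ip_add_right {n : ℕ} (v a b : Matrix (Fin n) (Fin n) ℝ) :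
    ip v (a + b) = ip v a + ip v b := by
  simp [ip, Matrix.mul_add, Matrix.trace_add]; ring

lemma ip_smul_right {n : ℕ} (c : ℝ) (v a : Matrix (Fin n) (Fin n) ℝ) :
    ip v (c • a) = c * ip v a := by
  simp [ip, Matrix.mul_smul, Matrix.trace_smul]

lemma ip_sub_left {n : ℕ} (a b w : Matrix (Fin n) (Fin n) ℝ) :
    ip (a - b) w = ip a w - ip b w := by
  simp [ip, Matrix.sub_mul, Matrix.trace_sub]; ring

lemma mem_perp_span {n : ℕ} {S : Set (Matrix (Fin n) (Fin n) ℝ)}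
    {v : Matrix (Fin n) (Fin n) ℝ} (hv : ∀ w ∈ S, ip v w = 0) :
    v ∈ perp (Submodule.span ℝ S) := by
  rw [mem_perp]
  intro w hw
  induction hw using Submodule.span_induction with
  | mem x hx => exact hv x hx
  | zero => simp [ip]
  | add x y _ _ hx hy => rw [ip_add_right, hx, hy]; ring
  | smul c x _ hx => rw [ip_smul_right, hx]; ring

lemma perp_mono {n : ℕ} {W W' : Submodule ℝ (Matrix (Fin n) (Fin n) ℝ)}
    (hWW : W ≤ W') : perp W' ≤ perp W := by
  intro v hv
  rw [mem_perp] at hv ⊢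
  exact fun w hw => hv w (hWW hw)

lemma ip_self_skew {n : ℕ} (A : Matrix (Fin n) (Fin n) ℝ) (hA : Aᵀ = -A) :
    ip A A = ∑ i, ∑ j, (A i j)^2 := by
  have h : ∀ a b, A b a = -A a b := fun a b => by
    have := congrFun (congrFun hA a) b
    simpa [Matrix.transpose_apply] using this
  have e : ∀ i j : Fin n, A i j * A j i = -((A i j)^2) := fun i j => by
    rw [h i j]; ring
  have htr : (A * A).trace = ∑ i, ∑ j, A i j * A j i := by
    simp [Matrix.trace, Matrix.mul_apply, Matrix.diag]
  rw [ip, htr]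
  simp only [e, Finset.sum_neg_distrib, neg_neg]

lemma ip_self_pos {n : ℕ} {A : Matrix (Fin n) (Fin n) ℝ} (hA : Aᵀ = -A) (h0 : A ≠ 0) :
    0 < ip A A := by
  obtain ⟨i, j, hij⟩ : ∃ i j, A i j ≠ 0 := by
    by_contra hc
    push_neg at hc
    exact h0 (by ext i j; simp [hc])
  rw [ip_self_skew A hA]
  refine Finset.sum_pos' (fun i _ => Finset.sum_nonneg fun j _ => sq_nonneg _)
    ⟨i, Finset.mem_univ i, Finset.sum_pos' (fun j _ => sq_nonneg _)
      ⟨j, Finset.mem_univ j, by positivity⟩⟩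

lemma nrm_pos_of {n : ℕ} {A : Matrix (Fin n) (Fin n) ℝ} (hA : Aᵀ = -A) (h0 : A ≠ 0) :
    0 < nrm A := Real.sqrt_pos.mpr (ip_self_pos hA h0)

lemma nrm_zero' {n : ℕ} : nrm (0 : Matrix (Fin n) (Fin n) ℝ) = 0 := by
  simp [nrm, ip]

end Aux

/-- In `so(6)` with the chain `h = so(3)^{prin} ⊂ k = so(5) (upper-left block)
⊂ so(6)` (1-based indices): the vectors `X = E₁₂ + E₂₆` and `Y = E₁₃ − E₃₆`
commute, while `[E₁₂, E₁₃] = −E₂₃` has nonzero orthogonal projection onto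
`m = so(5) ⊖ so(3)^{prin}`.  Hence condition (*) fails for
`(SO(3)^{prin}, SO(5), SO(6))`. -/
theorem stmt16 (h k m s : Submodule ℝ (Matrix (Fin 6) (Fin 6) ℝ))
    (hh : h = Submodule.span ℝ
      ({Real.sqrt 3 • E 0 3 - E 1 3 + E 2 4,
        Real.sqrt 3 • E 0 4 + E 1 4 + E 2 3,
        (2 : ℝ) • E 1 2 - E 3 4} : Set (Matrix (Fin 6) (Fin 6) ℝ)))
    (hk : k = Submodule.span ℝ
      ({E 0 1, E 0 2, E 0 3, E 0 4, E 1 2, E 1 3, E 1 4, E 2 3, E 2 4, E 3 4} :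
        Set (Matrix (Fin 6) (Fin 6) ℝ)))
    (hm : m = k ⊓ perp h) (hs : s = so 6 ⊓ perp k)
    (P : Matrix (Fin 6) (Fin 6) ℝ →ₗ[ℝ] Matrix (Fin 6) (Fin 6) ℝ)
    (hP : IsOrthProj m P) :
    (⁅E 0 1 + E 1 5, E 0 2 - E 2 5⁆ : Matrix (Fin 6) (Fin 6) ℝ) = 0 ∧
    (⁅E 0 1, E 0 2⁆ : Matrix (Fin 6) (Fin 6) ℝ) = -(E 1 2) ∧
    P (-(E 1 2)) ≠ 0 ∧
    ¬ CondStar m s P := by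
  obtain ⟨hPmem, hPid, hPperp⟩ := hP
  -- skewness of generators of k
  have hkso : k ≤ so 6 := by
    rw [hk, Submodule.span_le]
    intro A hA
    simp only [Set.mem_insert_iff, Set.mem_singleton_iff] at hA
    rcases hA with rfl|rfl|rfl|rfl|rfl|rfl|rfl|rfl|rfl|rfl <;>
      · show _ᵀ = _
        simp [E, Matrix.transpose_sub, std_transpose]
  have hmk : m ≤ k := by rw [hm]; exact inf_le_left
  have hmso : m ≤ so 6 := le_trans hmk hkso
  -- commutator computations
  have hbr0 : (⁅E 0 1 + E 1 5, E 0 2 - E 2 5⁆ : Matrix (Fin 6) (Fin 6) ℝ) = 0 := by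
    simp (config := { decide := true }) [Ring.lie_def, E, sub_mul, mul_sub, add_mul,
      mul_add, std_mul]
  have hbr1 : (⁅E 0 1, E 0 2⁆ : Matrix (Fin 6) (Fin 6) ℝ) = -(E 1 2) := by
    simp (config := { decide := true }) [Ring.lie_def, E, sub_mul, mul_sub, std_mul]
    abel
  -- memberships
  have hE01m : E 0 1 ∈ m := by
    rw [hm]
    refine ⟨hk ▸ Submodule.subset_span (by simp), hh ▸ mem_perp_span ?_⟩
    intro w hw
    simp only [Set.mem_insert_iff, Set.mem_singleton_iff] at hw
    rcases hw with rfl|rfl|rfl <;>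
      simp (config := { decide := true }) [ip, E, sub_mul, mul_sub, add_mul, mul_add,
        smul_mul_assoc, mul_smul_comm, std_mul, std_tr, Matrix.smul_mul, Matrix.mul_smul]
  have hE02m : E 0 2 ∈ m := by
    rw [hm]
    refine ⟨hk ▸ Submodule.subset_span (by simp), hh ▸ mem_perp_span ?_⟩
    intro w hw
    simp only [Set.mem_insert_iff, Set.mem_singleton_iff] at hw
    rcases hw with rfl|rfl|rfl <;>
      simp (config := { decide := true }) [ip, E, sub_mul, mul_sub, add_mul, mul_add,
        smul_mul_assoc, mul_smul_comm, std_mul, std_tr, Matrix.smul_mul, Matrix.mul_smul]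
  have hE15s : E 1 5 ∈ s := by
    rw [hs]
    constructor
    · show _ᵀ = _
      simp [E, Matrix.transpose_sub, std_transpose]
    · rw [hk]
      refine mem_perp_span ?_
      intro w hw
      simp only [Set.mem_insert_iff, Set.mem_singleton_iff] at hw
      rcases hw with rfl|rfl|rfl|rfl|rfl|rfl|rfl|rfl|rfl|rfl <;>
        simp (config := { decide := true }) [ip, E, sub_mul, mul_sub, std_mul, std_tr]
  have hE25s : E 2 5 ∈ s := by
    rw [hs]
    constructor
    · show _ᵀ = _
      simp [E, Matrix.transpose_sub, std_transpose]
    · rw [hk]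
      refine mem_perp_span ?_
      intro w hw
      simp only [Set.mem_insert_iff, Set.mem_singleton_iff] at hw
      rcases hw with rfl|rfl|rfl|rfl|rfl|rfl|rfl|rfl|rfl|rfl <;>
        simp (config := { decide := true }) [ip, E, sub_mul, mul_sub, std_mul, std_tr]
  -- the witness w0 ∈ m with ip (-(E 1 2)) w0 ≠ 0
  have hw0m : E 1 2 + (2:ℝ) • E 3 4 ∈ m := by
    rw [hm]
    constructor
    · rw [hk]
      exact add_mem (Submodule.subset_span (by simp))
        (Submodule.smul_mem _ _ (Submodule.subset_span (by simp)))
    · rw [hh]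
      refine mem_perp_span ?_
      intro w hw
      simp only [Set.mem_insert_iff, Set.mem_singleton_iff] at hw
      rcases hw with rfl|rfl|rfl <;>
        · simp (config := { decide := true }) [ip, E, sub_mul, mul_sub, add_mul, mul_add,
            smul_mul_assoc, mul_smul_comm, std_mul, std_tr, Matrix.smul_mul, Matrix.mul_smul]
          try norm_num
  -- P kills perp m
  have hPzero : ∀ v ∈ perp m, P v = 0 := by
    intro v hv
    by_contra h0
    have hz : P v ∈ perp m := by
      have h2 : v - (v - P v) ∈ perp m := Submodule.sub_mem _ hv (hPperp v)
      simpa using h2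
    have h00 : ip (P v) (P v) = 0 := hz (P v) (hPmem v)
    have := ip_self_pos (hmso (hPmem v)) h0
    linarith
  -- value of P(-(E 1 2)) against w0
  have hipval : ip (P (-(E 1 2))) (E 1 2 + (2:ℝ) • E 3 4) = -2 := by
    have h1 : ip (-(E 1 2) - P (-(E 1 2))) (E 1 2 + (2:ℝ) • E 3 4) = 0 :=
      hPperp (-(E 1 2)) _ hw0m
    rw [ip_sub_left] at h1
    have h2 : ip (-(E 1 2)) (E 1 2 + (2:ℝ) • E 3 4) = -2 := by
      simp (config := { decide := true }) [ip, E, sub_mul, mul_sub, add_mul, mul_add,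
        neg_mul, smul_mul_assoc, mul_smul_comm, std_mul, std_tr, Matrix.mul_smul]
      norm_num
    linarith
  have hPne : P (-(E 1 2)) ≠ 0 := by
    intro hz
    rw [hz] at hipval
    simp [ip] at hipval
  refine ⟨hbr0, hbr1, hPne, ?_⟩
  rintro ⟨C, hC, hall⟩
  have hX : E 0 1 + E 1 5 ∈ m ⊔ s :=
    add_mem (Submodule.mem_sup_left hE01m) (Submodule.mem_sup_right hE15s)
  have hY : E 0 2 - E 2 5 ∈ m ⊔ s :=
    sub_mem (Submodule.mem_sup_left hE02m) (Submodule.mem_sup_right hE25s)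
  have key := hall _ _ hX hY
  rw [hbr0, nrm_zero', mul_zero] at key
  -- compute P X and P Y
  have hE15perp : E 1 5 ∈ perp m := perp_mono hmk ((hs ▸ hE15s).2)
  have hE25perp : E 2 5 ∈ perp m := perp_mono hmk ((hs ▸ hE25s).2)
  have hPX : P (E 0 1 + E 1 5) = E 0 1 := by
    rw [map_add, hPid _ hE01m, hPzero _ hE15perp, add_zero]
  have hPY : P (E 0 2 - E 2 5) = E 0 2 := by
    rw [map_sub, hPid _ hE02m, hPzero _ hE25perp, sub_zero]
  rw [hPX, hPY, hbr1] at key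
  have hpos : 0 < nrm (P (-(E 1 2))) :=
    nrm_pos_of (hmso (hPmem _)) hPne
  linarith
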